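/- arXiv:1804.03013 — 3 statements merged into one kernel-verified Lean document; each statement's English description precedes it below -/
import Mathlib

section
/- Let P be a point of the Euclidean plane ℝ² with ‖P‖ < 1, and let A₁, B₁, A₂, B₂ be points on the unit circle centered at the origin (‖A₁‖ = ‖B₁‖ = ‖A₂‖ = ‖B₂‖ = 1) such that A₁ ≠ B₁, A₂ ≠ B₂, P lies on the line through A₁ and B₁, P lies on the line through A₂ and B₂, and the two chords are perpendicular, i.e. ⟪B₁ − A₁, B₂ − A₂⟫ = 0. Then ‖A₁ − P‖² + ‖B₁ − P‖² + ‖A₂ − P‖² + ‖B₂ − P‖² = 4. -/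
open RealInnerProductSpace

/-- In the plane, for orthogonal `u, v`, Parseval-type identity for any `P`. -/
lemma plane_parseval (u v P : EuclideanSpace ℝ (Fin 2))
    (huv : ⟪u, v⟫ = 0) :
    ‖P‖ ^ 2 * ‖u‖ ^ 2 * ‖v‖ ^ 2
      = ⟪P, u⟫ ^ 2 * ‖v‖ ^ 2 + ⟪P, v⟫ ^ 2 * ‖u‖ ^ 2 := by
  rw [← real_inner_self_eq_norm_sq, ← real_inner_self_eq_norm_sq,
    ← real_inner_self_eq_norm_sq]
  simp only [PiLp.inner_apply, RCLike.inner_apply, conj_trivial,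
    Fin.sum_univ_two] at huv ⊢
  set p0 := P 0; set p1 := P 1
  set u0 := u 0; set u1 := u 1
  set v0 := v 0; set v1 := v 1
  linear_combination
    ((p1 ^ 2 - p0 ^ 2) * (u0 * v0 - u1 * v1) - 2 * p0 * p1 * (u1 * v0 + u0 * v1)) * huv

/-- **Archimedes' Theorem** (Proposition 11 of the *Book of Lemmas*):
if two perpendicular chords `A₁B₁` and `A₂B₂` of the unit circle meet at an
interior point `P`, then the sum of the squares of the four distances from `P`
to the chord endpoints is `4`. -/
theorem archimedes_perpendicular_chords
    (P A₁ B₁ A₂ B₂ : EuclideanSpace ℝ (Fin 2))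
    (hP : ‖P‖ < 1)
    (hA₁ : ‖A₁‖ = 1) (hB₁ : ‖B₁‖ = 1) (hA₂ : ‖A₂‖ = 1) (hB₂ : ‖B₂‖ = 1)
    (hne₁ : A₁ ≠ B₁) (hne₂ : A₂ ≠ B₂)
    (hcol₁ : Collinear ℝ ({P, A₁, B₁} : Set (EuclideanSpace ℝ (Fin 2))))
    (hcol₂ : Collinear ℝ ({P, A₂, B₂} : Set (EuclideanSpace ℝ (Fin 2))))
    (hperp : ⟪B₁ - A₁, B₂ - A₂⟫ = 0) :
    ‖A₁ - P‖ ^ 2 + ‖B₁ - P‖ ^ 2 + ‖A₂ - P‖ ^ 2 + ‖B₂ - P‖ ^ 2 = 4 := by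
  obtain ⟨u, hu⟩ := (collinear_iff_of_mem (Set.mem_insert P _)).mp hcol₁
  obtain ⟨v, hv⟩ := (collinear_iff_of_mem (Set.mem_insert P _)).mp hcol₂
  obtain ⟨a, ha⟩ := hu A₁ (by simp)
  obtain ⟨b, hb⟩ := hu B₁ (by simp)
  obtain ⟨c, hc⟩ := hv A₂ (by simp)
  obtain ⟨d, hd⟩ := hv B₂ (by simp)
  simp only [vadd_eq_add] at ha hb hc hd
  have hu0 : u ≠ 0 := by
    rintro rfl
    exact hne₁ (by rw [ha, hb, smul_zero, smul_zero])
  have hv0 : v ≠ 0 := by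
    rintro rfl
    exact hne₂ (by rw [hc, hd, smul_zero, smul_zero])
  have hab : a ≠ b := by
    rintro rfl; exact hne₁ (by rw [ha, hb])
  have hcd : c ≠ d := by
    rintro rfl; exact hne₂ (by rw [hc, hd])
  -- orthogonality of the directions
  have huv : ⟪u, v⟫ = 0 := by
    have h1 : B₁ - A₁ = (b - a) • u := by rw [ha, hb, sub_smul]; abel
    have h2 : B₂ - A₂ = (d - c) • v := by rw [hc, hd, sub_smul]; abel
    rw [h1, h2, real_inner_smul_left, real_inner_smul_right] at hperp
    have h3 : (b - a) * ((d - c) * ⟪u, v⟫) = 0 := hperp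
    rcases mul_eq_zero.mp h3 with h | h
    · exact absurd (sub_eq_zero.mp h) (Ne.symm hab)
    rcases mul_eq_zero.mp h with h | h
    · exact absurd (sub_eq_zero.mp h) (Ne.symm hcd)
    · exact h
  set N := ‖P‖ ^ 2 with hN
  set U := ‖u‖ ^ 2 with hU
  set V := ‖v‖ ^ 2 with hV
  set p := ⟪P, u⟫ with hp
  set q := ⟪P, v⟫ with hq
  have hun : ‖u‖ ≠ 0 := norm_ne_zero_iff.mpr hu0
  have hvn : ‖v‖ ≠ 0 := norm_ne_zero_iff.mpr hv0
  have hUpos : 0 < U := by positivity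
  have hVpos : 0 < V := by positivity
  -- unit-circle conditions in scalar form
  have key : ∀ (t : ℝ) (w : EuclideanSpace ℝ (Fin 2)) (x : EuclideanSpace ℝ (Fin 2)),
      ‖x‖ = 1 → x = t • w + P → t ^ 2 * ‖w‖ ^ 2 + 2 * t * ⟪P, w⟫ + N = 1 := by
    intro t w x hx hxe
    have : ‖t • w + P‖ ^ 2 = 1 := by rw [← hxe, hx]; norm_num
    rw [norm_add_sq_real, norm_smul, real_inner_smul_left, mul_pow] at this
    rw [real_inner_comm] at this
    calc t ^ 2 * ‖w‖ ^ 2 + 2 * t * ⟪P, w⟫ + N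
        = |t| ^ 2 * ‖w‖ ^ 2 + 2 * (t * ⟪P, w⟫) + ‖P‖ ^ 2 := by rw [sq_abs]; ring
      _ = 1 := this
  have e1 := key a u A₁ hA₁ ha
  have e2 := key b u B₁ hB₁ hb
  have e3 := key c v A₂ hA₂ hc
  have e4 := key d v B₂ hB₂ hd
  -- eliminate p and q
  have hpval : 2 * p + (a + b) * U = 0 := by
    have h : (a - b) * (2 * p + (a + b) * U) = 0 := by linear_combination e1 - e2
    rcases mul_eq_zero.mp h with h | h
    · exact absurd (sub_eq_zero.mp h) hab
    · exact h
  have hqval : 2 * q + (c + d) * V = 0 := by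
    have h : (c - d) * (2 * q + (c + d) * V) = 0 := by linear_combination e3 - e4
    rcases mul_eq_zero.mp h with h | h
    · exact absurd (sub_eq_zero.mp h) hcd
    · exact h
  have habU : N - a * b * U = 1 := by linear_combination e1 - a * hpval
  have hcdV : N - c * d * V = 1 := by linear_combination e3 - c * hqval
  -- the 2-dimensional identity
  have hpar := plane_parseval u v P huv
  have h4N : 4 * N = (a + b) ^ 2 * U + (c + d) ^ 2 * V := by
    have hz : (4 * N - (a + b) ^ 2 * U - (c + d) ^ 2 * V) * (U * V) = 0 := by
      linear_combination 4 * hpar + (2 * p - (a + b) * U) * V * hpval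
        + (2 * q - (c + d) * V) * U * hqval
    rcases mul_eq_zero.mp hz with h | h
    · linarith [sub_eq_zero.mp (by linarith : 4 * N - ((a + b) ^ 2 * U + (c + d) ^ 2 * V) = 0)]
    · exact absurd h (by positivity)
  -- rewrite the goal
  have g1 : ‖A₁ - P‖ ^ 2 = a ^ 2 * U := by
    rw [ha, add_sub_cancel_right, norm_smul, mul_pow, Real.norm_eq_abs, sq_abs]
  have g2 : ‖B₁ - P‖ ^ 2 = b ^ 2 * U := by
    rw [hb, add_sub_cancel_right, norm_smul, mul_pow, Real.norm_eq_abs, sq_abs]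
  have g3 : ‖A₂ - P‖ ^ 2 = c ^ 2 * V := by
    rw [hc, add_sub_cancel_right, norm_smul, mul_pow, Real.norm_eq_abs, sq_abs]
  have g4 : ‖B₂ - P‖ ^ 2 = d ^ 2 * V := by
    rw [hd, add_sub_cancel_right, norm_smul, mul_pow, Real.norm_eq_abs, sq_abs]
  rw [g1, g2, g3, g4]
  linear_combination -h4N + 2 * habU + 2 * hcdV
end

section
/- Let n ≥ 1 be a natural number, α ∈ ℝ, and let P ∈ ℝ² satisfy P = c · u(α) for some real c. For each integer j define C_j = P − ⟪P, u(α + jπ/n)⟫ · u(α + jπ/n) (the foot of the perpendicular from the origin to the line through P in direction u(α + jπ/n), i.e. the midpoint of the corresponding chord). Then for every k with 1 ≤ k ≤ n, (C_k − P) + (C_{n−k} − P) = −2·cos²(kπ/n) · P. -/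
/-!
The chords in directions `α + θ` and `α + (π - θ)` are mirror images in the diameter
`ℝ • u α`: the projections of `P = c • u α` onto them are `c cos θ • u (α + θ)` and
`c cos θ • u (α - θ)`, whose sum is `2 c cos² θ • u α`.
-/

open RealInnerProductSpace Real

/-- The unit vector in direction `φ`. -/
noncomputable def u (φ : ℝ) : EuclideanSpace ℝ (Fin 2) :=
  !₂[Real.cos φ, Real.sin φ]

lemma inner_u_u (α β : ℝ) : ⟪u α, u β⟫ = cos (β - α) := by
  simp [u, PiLp.inner_apply, Fin.sum_univ_two, cos_sub]

lemma u_add_pi (φ : ℝ) : u (φ + π) = -u φ := by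
  ext i; fin_cases i <;> simp [u]

lemma u_add_add_u_sub (α θ : ℝ) : u (α + θ) + u (α - θ) = (2 * cos θ) • u α := by
  ext i; fin_cases i <;> simp [u, cos_add, cos_sub, sin_add, sin_sub] <;> ring

lemma inner_smul_u_add_inner_smul_u_supplementary (c α θ : ℝ) :
    ⟪c • u α, u (α + θ)⟫ • u (α + θ) + ⟪c • u α, u (α - θ + π)⟫ • u (α - θ + π) =
      (2 * cos θ ^ 2) • c • u α := by
  have hsupp : α - θ + π - α = π - θ := by ring
  rw [real_inner_smul_left, real_inner_smul_left, inner_u_u, inner_u_u, add_sub_cancel_left,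
    hsupp, cos_pi_sub, u_add_pi, smul_neg, mul_neg, neg_smul, neg_neg, ← smul_add,
    u_add_add_u_sub, smul_smul, smul_smul]
  congr 1
  ring

/-- The midpoint pairing identity: if `P = c • u α` and `C j` is the midpoint
of the chord through `P` in direction `u (α + jπ/n)` (the foot of the
perpendicular from the origin to that line), then for `1 ≤ k ≤ n`,
`(C k - P) + (C (n-k) - P) = -2 cos²(kπ/n) • P`. -/
theorem midpoint_pairing
    (n : ℕ) (hn : 1 ≤ n) (α : ℝ) (P : EuclideanSpace ℝ (Fin 2))
    (c : ℝ) (hdiam : P = c • u α)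
    (C : ℤ → EuclideanSpace ℝ (Fin 2))
    (hC : ∀ j : ℤ, C j =
      P - ⟪P, u (α + j * π / n)⟫ • u (α + j * π / n)) :
    ∀ k : ℤ, 1 ≤ k → k ≤ (n : ℤ) →
      (C k - P) + (C ((n : ℤ) - k) - P) =
        (-2 * Real.cos (k * π / n) ^ 2) • P := by
  intro k _ _
  have hn₀ : (n : ℝ) ≠ 0 := by exact_mod_cast Nat.one_le_iff_ne_zero.mp hn
  have hsupp : α + (((n : ℤ) - k : ℤ) : ℝ) * π / n = α - k * π / n + π := by
    push_cast
    field_simp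
    ring
  rw [hC, hC, hsupp, sub_sub_cancel_left, sub_sub_cancel_left, ← neg_add, hdiam,
    inner_smul_u_add_inner_smul_u_supplementary, neg_mul, neg_smul]
end

section
/- Let α ∈ ℝ, θ ≥ 0, and P ∈ ℝ² with ‖P‖ < 1. Then ∑_{k=0}^{3} ∫_{0}^{θ} (1/2) · ρ(P, α + kπ/2 + φ)² dφ = 2θ. In words: if two perpendicular chords of a unit circle are drawn through an interior point P and rotated counterclockwise about P through an angle θ, the area they sweep out equals 2θ, depending only on θ and not on P. -/
open RealInnerProductSpace Real

/-- The distance from an interior point `P` of the unit disc to the unit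
circle along the ray in direction `φ`. -/
noncomputable def ρ (P : EuclideanSpace ℝ (Fin 2)) (φ : ℝ) : ℝ :=
  -⟪P, u φ⟫ + Real.sqrt (⟪P, u φ⟫ ^ 2 + 1 - ‖P‖ ^ 2)

/-! Splitting the four half-chords into two opposite pairs: if `c = ⟪P, u φ⟫` and
`s = √(c² + 1 - ‖P‖²)`, the opposite half-chords have lengths `s - c` and `s + c`, so their
squares add up to `4c² + 2(1 - ‖P‖²)`. For the two perpendicular directions `φ` and `φ + π/2`
the values `c²` add up to `‖P‖²`, hence the integrand `½ ∑ ρ²` is identically `2`. -/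

lemma inner_u (P : EuclideanSpace ℝ (Fin 2)) (φ : ℝ) :
    ⟪P, u φ⟫ = P 0 * cos φ + P 1 * sin φ := by
  simp [u, PiLp.inner_apply, Fin.sum_univ_two, mul_comm]

lemma continuous_ρ (P : EuclideanSpace ℝ (Fin 2)) : Continuous (ρ P) := by
  unfold ρ
  simp only [inner_u]
  fun_prop

lemma inner_u_add_pi (P : EuclideanSpace ℝ (Fin 2)) (φ : ℝ) :
    ⟪P, u (φ + π)⟫ = -⟪P, u φ⟫ := by
  simp only [inner_u, cos_add_pi, sin_add_pi]; ring

lemma inner_u_sq_add_inner_u_add_pi_div_two_sq (P : EuclideanSpace ℝ (Fin 2)) (φ : ℝ) :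
    ⟪P, u φ⟫ ^ 2 + ⟪P, u (φ + π / 2)⟫ ^ 2 = ‖P‖ ^ 2 := by
  rw [EuclideanSpace.real_norm_sq_eq, Fin.sum_univ_two, inner_u, inner_u,
    cos_add_pi_div_two, sin_add_pi_div_two]
  linear_combination (P 0 ^ 2 + P 1 ^ 2) * sin_sq_add_cos_sq φ

lemma ρ_sq_add_ρ_add_pi_sq {P : EuclideanSpace ℝ (Fin 2)} (hP : ‖P‖ ≤ 1) (φ : ℝ) :
    ρ P φ ^ 2 + ρ P (φ + π) ^ 2 = 4 * ⟪P, u φ⟫ ^ 2 + 2 * (1 - ‖P‖ ^ 2) := by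
  have hrad : 0 ≤ ⟪P, u φ⟫ ^ 2 + 1 - ‖P‖ ^ 2 := by
    nlinarith [sq_nonneg ⟪P, u φ⟫, norm_nonneg P]
  rw [ρ, ρ, inner_u_add_pi, neg_sq]
  linear_combination 2 * sq_sqrt hrad

lemma sum_half_ρ_sq_four_directions {P : EuclideanSpace ℝ (Fin 2)} (hP : ‖P‖ ≤ 1) (β : ℝ) :
    ∑ k ∈ Finset.range 4, (1 / 2) * ρ P (β + k * π / 2) ^ 2 = 2 := by
  have hβ := ρ_sq_add_ρ_add_pi_sq hP β
  have hβ' := ρ_sq_add_ρ_add_pi_sq hP (β + π / 2)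
  have hperp := inner_u_sq_add_inner_u_add_pi_div_two_sq P β
  simp only [Finset.sum_range_succ, Finset.sum_range_zero]
  push_cast
  rw [show β + 0 * π / 2 = β by ring, show β + 1 * π / 2 = β + π / 2 by ring,
    show β + 2 * π / 2 = β + π by ring, show β + 3 * π / 2 = β + π / 2 + π by ring]
  linear_combination (hβ + hβ') / 2 + 2 * hperp

theorem crux_problem_general
    (α θ : ℝ)
    (P : EuclideanSpace ℝ (Fin 2)) (hP : ‖P‖ < 1) :
    ∑ k ∈ Finset.range 4,
      ∫ φ in (0 : ℝ)..θ, (1 / 2) * ρ P (α + k * π / 2 + φ) ^ 2 = 2 * θ := by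
  have hρ := continuous_ρ P
  rw [← intervalIntegral.integral_finsetSum fun k _ => by
    apply Continuous.intervalIntegrable; fun_prop]
  have hsum (φ : ℝ) : ∑ k ∈ Finset.range 4, (1 / 2) * ρ P (α + k * π / 2 + φ) ^ 2 = 2 := by
    simpa only [add_right_comm α] using sum_half_ρ_sq_four_directions hP.le (α + φ)
  simp only [hsum, intervalIntegral.integral_const, smul_eq_mul, sub_zero]
  ring

/-- **The Crux problem** (Problem 1325 of *Crux Mathematicorum*): two
perpendicular chords of the unit circle through an interior point `P`, when
rotated counterclockwise about `P` through an angle `θ ≥ 0`, sweep out a total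
area of `2θ`, independent of `P`. -/
theorem crux_problem
    (α θ : ℝ) (hθ : 0 ≤ θ)
    (P : EuclideanSpace ℝ (Fin 2)) (hP : ‖P‖ < 1) :
    ∑ k ∈ Finset.range 4,
      ∫ φ in (0 : ℝ)..θ, (1 / 2) * ρ P (α + k * π / 2 + φ) ^ 2 = 2 * θ :=
  crux_problem_general α θ P hP
end
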